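/- arXiv:2106.15763 — 2 statements merged into one kernel-verified Lean document; each statement's English description precedes it below -/
import Mathlib

section
/- Let Φ : X → Y be Lipschitz from a quasiconvex metric space, d_Φ the associated pseudometric (infimum of lengths of Φ-images of curves joining two points), Z_Φ the quotient metric space of X by the relation d_Φ(x,y)=0, ψ : X → Z_Φ the quotient map and φ : Z_Φ → Y the induced map with Φ = φ∘ψ. Then for every Lipschitz curve γ : [0,1] → X, the curve α = ψ∘γ in Z_Φ satisfies ℓ(α) = ℓ(φ∘α) = ℓ(Φ∘γ). -/
open Set

/-- `dPhi Φ x y` is the infimum of the lengths `ℓ(Φ∘γ)` over all rectifiable curves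
`γ : [0,1] → X` joining `x` to `y`. -/
noncomputable def dPhi {X Y : Type*} [MetricSpace X] [MetricSpace Y] (Φ : X → Y)
    (x y : X) : ENNReal :=
  ⨅ (γ : ℝ → X) (_ : ContinuousOn γ (Icc 0 1)) (_ : eVariationOn γ (Icc 0 1) ≠ ⊤)
    (_ : γ 0 = x) (_ : γ 1 = y), eVariationOn (Φ ∘ γ) (Icc 0 1)

/-- `X` is `C`-quasiconvex. -/
def IsQuasiconvexSpace (X : Type*) [MetricSpace X] (C : NNReal) : Prop :=
  ∀ x y : X, ∃ γ : ℝ → X, ContinuousOn γ (Icc 0 1) ∧ γ 0 = x ∧ γ 1 = y ∧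
    eVariationOn γ (Icc 0 1) ≤ (C : ENNReal) * edist x y

/-! The quotient distance `d_Z(ψ (γ s), ψ (γ t)) = d_Φ(γ s, γ t)` lies between
`d_Y(Φ (γ s), Φ (γ t))` and the length of `Φ ∘ γ` on `[s, t]`, the subarc of `γ` being a
competitor in `d_Φ`. The upper bound, summed over a partition, gives `ℓ(ψ ∘ γ) ≤ ℓ(Φ ∘ γ)`;
the lower bound makes `φ` 1-Lipschitz on the range of `ψ`, which gives the reverse inequality. -/

theorem eVariationOn_le_of_edist_le {α E F : Type*} [LinearOrder α] [PseudoEMetricSpace E]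
    [PseudoEMetricSpace F] {f : α → E} {g : α → F} {s : Set α}
    (h : ∀ x ∈ s, ∀ y ∈ s, x ≤ y → edist (f x) (f y) ≤ eVariationOn g (s ∩ Icc x y)) :
    eVariationOn f s ≤ eVariationOn g s := by
  refine iSup_le ?_
  rintro ⟨n, u, hu, us⟩
  calc ∑ i ∈ Finset.range n, edist (f (u (i + 1))) (f (u i))
      ≤ ∑ i ∈ Finset.range n, eVariationOn g (s ∩ Icc (u i) (u (i + 1))) :=
        Finset.sum_le_sum fun i _ => by
          rw [edist_comm]
          exact h _ (us i) _ (us (i + 1)) (hu i.le_succ)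
    _ = eVariationOn g (s ∩ Icc (u 0) (u n)) := eVariationOn.sum g hu fun i _ _ => us i
    _ ≤ eVariationOn g s := eVariationOn.mono g inter_subset_left

section dPhi

variable {X Y : Type*} [MetricSpace X] [MetricSpace Y]

theorem edist_le_dPhi (Φ : X → Y) (x y : X) : edist (Φ x) (Φ y) ≤ dPhi Φ x y :=
  le_iInf fun γ => le_iInf fun _ => le_iInf fun _ => le_iInf fun h0 => le_iInf fun h1 =>
    h0 ▸ h1 ▸ eVariationOn.edist_le (Φ ∘ γ) (left_mem_Icc.2 zero_le_one)
      (right_mem_Icc.2 zero_le_one)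

/-- The competitor is `γ` reparametrized affinely from `[0, 1]` onto `[s, t]`. -/
theorem dPhi_le_eVariationOn_Icc (Φ : X → Y) {γ : ℝ → X} {s t : ℝ} (hst : s ≤ t)
    (hγc : ContinuousOn γ (Icc s t)) (hγv : BoundedVariationOn γ (Icc s t)) :
    dPhi Φ (γ s) (γ t) ≤ eVariationOn (Φ ∘ γ) (Icc s t) := by
  set ρ : ℝ →ᵃ[ℝ] ℝ := AffineMap.lineMap s t
  have hρ_image : ρ '' Icc 0 1 = Icc s t := by
    rw [← segment_eq_image_lineMap, segment_eq_Icc hst]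
  have hρ_mono : MonotoneOn ρ (Icc 0 1) := (AffineMap.lineMap_mono hst).monotoneOn _
  have hvarX : eVariationOn (γ ∘ ρ) (Icc 0 1) = eVariationOn γ (Icc s t) := by
    rw [eVariationOn.comp_eq_of_monotoneOn γ ρ hρ_mono, hρ_image]
  have hvarY : eVariationOn ((Φ ∘ γ) ∘ ρ) (Icc 0 1) = eVariationOn (Φ ∘ γ) (Icc s t) := by
    rw [eVariationOn.comp_eq_of_monotoneOn (Φ ∘ γ) ρ hρ_mono, hρ_image]
  have hcont : ContinuousOn (γ ∘ ρ) (Icc 0 1) :=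
    hγc.comp (AffineMap.lineMap_continuous).continuousOn (hρ_image ▸ mapsTo_image ρ _)
  rw [← hvarY]
  exact iInf_le_of_le (γ ∘ ρ) <| iInf_le_of_le hcont <| iInf_le_of_le (hvarX ▸ hγv) <|
    iInf_le_of_le (by simp [ρ]) <| iInf_le _ (by simp [ρ])

theorem lipschitzOnWith_one_range_of_edist_eq_dPhi {Z : Type*} [MetricSpace Z] {Φ : X → Y}
    {ψ : X → Z} {φ : Z → Y} (hfactor : Φ = φ ∘ ψ)
    (hquot : ∀ x y : X, edist (ψ x) (ψ y) = dPhi Φ x y) :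
    LipschitzOnWith 1 φ (range ψ) := by
  rintro _ ⟨x, rfl⟩ _ ⟨y, rfl⟩
  rw [ENNReal.coe_one, one_mul, hquot]
  exact hfactor ▸ edist_le_dPhi Φ x y

end dPhi

theorem stmt_10_general {X Y Z : Type*} [MetricSpace X] [MetricSpace Y] [MetricSpace Z]
    (Φ : X → Y)
    (ψ : X → Z) (φ : Z → Y) (hfactor : Φ = φ ∘ ψ)
    (hquot : ∀ x y : X, edist (ψ x) (ψ y) = dPhi Φ x y)
    (K : NNReal) (γ : ℝ → X) (hγ : LipschitzOnWith K γ (Icc 0 1)) :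
    eVariationOn (ψ ∘ γ) (Icc 0 1) = eVariationOn (φ ∘ (ψ ∘ γ)) (Icc 0 1) ∧
    eVariationOn (ψ ∘ γ) (Icc 0 1) = eVariationOn (Φ ∘ γ) (Icc 0 1) := by
  have hcomp : φ ∘ (ψ ∘ γ) = Φ ∘ γ := by rw [hfactor]; rfl
  have hle : eVariationOn (ψ ∘ γ) (Icc 0 1) ≤ eVariationOn (Φ ∘ γ) (Icc 0 1) := by
    refine eVariationOn_le_of_edist_le fun x hx y hy hxy => ?_
    have hsub : Icc x y ⊆ Icc 0 1 := Icc_subset_Icc hx.1 hy.2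
    have hγv : BoundedVariationOn γ (Icc x y) := by
      simpa only [inter_self] using
        (hγ.mono hsub).locallyBoundedVariationOn x y (left_mem_Icc.2 hxy) (right_mem_Icc.2 hxy)
    rw [inter_eq_right.2 hsub, Function.comp_apply, Function.comp_apply, hquot]
    exact dPhi_le_eVariationOn_Icc Φ hxy (hγ.mono hsub).continuousOn hγv
  have hge : eVariationOn (Φ ∘ γ) (Icc 0 1) ≤ eVariationOn (ψ ∘ γ) (Icc 0 1) := by
    have hφ := lipschitzOnWith_one_range_of_edist_eq_dPhi hfactor hquot
    simpa [hcomp] using hφ.comp_eVariationOn_le (g := ψ ∘ γ) (s := Icc 0 1)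
      fun x _ => mem_range_self (γ x)
  have heq := le_antisymm hle hge
  exact ⟨by rwa [hcomp], heq⟩

/-- If `Z` is the metric quotient of `X` by `d_Φ` (i.e. `ψ : X → Z` is surjective with
`d_Z(ψx,ψy) = d_Φ(x,y)`) and `Φ = φ ∘ ψ`, then for every Lipschitz curve `γ` in `X`
the curve `α = ψ∘γ` satisfies `ℓ(α) = ℓ(φ∘α) = ℓ(Φ∘γ)`. -/
theorem stmt_10 {X Y Z : Type*} [MetricSpace X] [MetricSpace Y] [MetricSpace Z]
    (Cq L : NNReal) (hCq : 1 ≤ Cq) (hq : IsQuasiconvexSpace X Cq)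
    (Φ : X → Y) (hΦ : LipschitzWith L Φ)
    (ψ : X → Z) (φ : Z → Y) (hfactor : Φ = φ ∘ ψ) (hsurj : Function.Surjective ψ)
    (hquot : ∀ x y : X, edist (ψ x) (ψ y) = dPhi Φ x y)
    (K : NNReal) (γ : ℝ → X) (hγ : LipschitzOnWith K γ (Icc 0 1)) :
    eVariationOn (ψ ∘ γ) (Icc 0 1) = eVariationOn (φ ∘ (ψ ∘ γ)) (Icc 0 1) ∧
    eVariationOn (ψ ∘ γ) (Icc 0 1) = eVariationOn (Φ ∘ γ) (Icc 0 1) :=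
  stmt_10_general Φ ψ φ hfactor hquot K γ hγ
end

section
/- Let F : [0,1]^{n+m} → ℝⁿ be Lipschitz, E measurable with Ĥ^{n,m}_∞(F,E) = 0 and m ≥ 1. Then for H^n-almost every y ∈ ℝⁿ, the m-dimensional Hausdorff measure of F⁻¹(y) ∩ E is zero. -/
/-!
Cover `E` by sets `Aᵢ` with `∑ᵢ H^n_∞(F(Aᵢ)) (diam Aᵢ)^m` small, and let `Zᵢ ⊇ F(Aᵢ)` be
measurable hulls. The fibre `F⁻¹(y) ∩ E` is covered by the sets `F⁻¹(y) ∩ Aᵢ` with `y ∈ Zᵢ`, so its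
`m`-dimensional size is controlled by `g(y) = ∑ᵢ (diam Aᵢ)^m χ_{Zᵢ}(y)`, whose integral is at most
`2^n ∑ᵢ H^n_∞(F(Aᵢ)) (diam Aᵢ)^m` because Lebesgue measure is dominated by `2^n H^n_∞`. Choosing
covers whose sums are summable, the functions `g_k` tend to `0` almost everywhere, and at each such
`y` the fibre covers have diameters and `m`-sums tending to `0`.
-/

open Set MeasureTheory

/-- Hausdorff content `H^n_∞` (with the standard normalization `ω_n (diam/2)^n`). -/
noncomputable def hContent {X : Type*} [EMetricSpace X] (n : ℕ) (E : Set X) : ENNReal :=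
  ⨅ (A : ℕ → Set X) (_ : E ⊆ ⋃ i, A i),
    ∑' i, volume (Metric.ball (0 : EuclideanSpace ℝ (Fin n)) 1) / 2 ^ n *
      (EMetric.diam (A i)) ^ n

/-- The mapping content `Ĥ^{n,m}_∞(F,E)`. -/
noncomputable def mapContent {X Y : Type*} [EMetricSpace X] [EMetricSpace Y]
    (n m : ℕ) (Q₀ : Set X) (F : X → Y) (E : Set X) : ENNReal :=
  ⨅ (A : ℕ → Set X) (_ : E ⊆ ⋃ i, A i) (_ : ∀ i, A i ⊆ Q₀),
    ∑' i, hContent n (F '' A i) * (EMetric.diam (A i)) ^ m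

/-- The unit cube `[0,1]^d`. -/
def unitCube (d : ℕ) : Set (EuclideanSpace ℝ (Fin d)) := {x | ∀ i, x i ∈ Icc (0:ℝ) 1}

open Filter Metric
open scoped ENNReal Topology

theorem MeasureTheory.Measure.addHaar_le_addHaar_ball_mul_ediam_pow {E : Type*}
    [NormedAddCommGroup E] [NormedSpace ℝ E] [MeasurableSpace E] [BorelSpace E]
    [FiniteDimensional ℝ E] (μ : Measure E) [μ.IsAddHaarMeasure] (A : Set E) :
    μ A ≤ μ (ball 0 1) * ediam A ^ Module.finrank ℝ E := by
  rcases A.eq_empty_or_nonempty with rfl | ⟨x, hx⟩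
  · simp
  rcases eq_or_ne (ediam A) ⊤ with hA | hA
  · have hrank : Module.finrank ℝ E ≠ 0 := fun h => by
      have : Subsingleton E := Module.finrank_zero_iff.mp h
      simp [ediam_subsingleton A.subsingleton_of_subsingleton] at hA
    rw [hA, ENNReal.top_pow hrank, ENNReal.mul_top (measure_ball_pos μ 0 one_pos).ne']
    exact le_top
  calc μ A ≤ μ (closedBall x (ediam A).toReal) := measure_mono fun y hy => by
        rw [mem_closedBall, dist_edist]
        exact ENNReal.toReal_mono hA (edist_le_ediam_of_mem hy hx)
    _ = μ (ball 0 1) * ediam A ^ Module.finrank ℝ E := by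
        rw [Measure.addHaar_closedBall μ x ENNReal.toReal_nonneg,
          ENNReal.ofReal_pow ENNReal.toReal_nonneg, ENNReal.ofReal_toReal hA, mul_comm]

theorem volume_le_two_pow_mul_hContent (n : ℕ) (S : Set (EuclideanSpace ℝ (Fin n))) :
    volume S ≤ 2 ^ n * hContent n S := by
  have h0 : (2 : ℝ≥0∞) ^ n ≠ 0 := by positivity
  have ht : (2 : ℝ≥0∞) ^ n ≠ ⊤ := by simp
  simp only [hContent, ENNReal.mul_iInf_of_ne h0 ht]
  refine le_iInf₂ fun A hA => ?_
  calc volume S ≤ ∑' i, volume (A i) := (measure_mono hA).trans (measure_iUnion_le A)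
    _ ≤ ∑' i, volume (ball (0 : EuclideanSpace ℝ (Fin n)) 1) * ediam (A i) ^ n :=
        ENNReal.tsum_le_tsum fun i => by
          simpa using volume.addHaar_le_addHaar_ball_mul_ediam_pow (A i)
    _ = 2 ^ n *
          ∑' i, volume (ball (0 : EuclideanSpace ℝ (Fin n)) 1) / 2 ^ n * ediam (A i) ^ n := by
        rw [← ENNReal.tsum_mul_left]
        simp only [← mul_assoc, ENNReal.mul_div_cancel h0 ht]

theorem exists_cover_of_mapContent_lt {X Y : Type*} [EMetricSpace X] [EMetricSpace Y]
    {n m : ℕ} {Q₀ : Set X} {F : X → Y} {E : Set X} {ε : ℝ≥0∞}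
    (h : mapContent n m Q₀ F E < ε) :
    ∃ A : ℕ → Set X, E ⊆ ⋃ i, A i ∧ ∑' i, hContent n (F '' A i) * ediam (A i) ^ m < ε := by
  simp only [mapContent, iInf_lt_iff] at h
  obtain ⟨A, hEA, -, hA⟩ := h
  exact ⟨A, hEA, hA⟩

theorem MeasureTheory.Measure.hausdorffMeasure_eq_zero_of_tendsto_tsum_ediam_rpow {X : Type*}
    [EMetricSpace X] [MeasurableSpace X] [BorelSpace X] {d : ℝ} (hd : 0 < d) {s : Set X}
    (t : ℕ → ℕ → Set X)
    (hst : ∀ k, s ⊆ ⋃ i, t k i)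
    (ht : Tendsto (fun k => ∑' i, ediam (t k i) ^ d) atTop (𝓝 0)) :
    μH[d] s = 0 := by
  set r : ℕ → ℝ≥0∞ := fun k => (∑' i, ediam (t k i) ^ d) ^ d⁻¹
  have hr : Tendsto r atTop (𝓝 0) := by
    have := ((ENNReal.continuous_rpow_const (y := d⁻¹)).tendsto 0).comp ht
    rwa [ENNReal.zero_rpow_of_pos (inv_pos.mpr hd)] at this
  have hdiam : ∀ k i, ediam (t k i) ≤ r k := fun k i =>
    (ENNReal.le_rpow_inv_iff hd).mpr (ENNReal.le_tsum (f := fun i => ediam (t k i) ^ d) i)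
  refine le_antisymm ?_ zero_le
  calc μH[d] s ≤ liminf (fun k => ∑' i, ediam (t k i) ^ d) atTop :=
        Measure.hausdorffMeasure_le_liminf_tsum d s r hr t (.of_forall hdiam) (.of_forall hst)
    _ = 0 := ht.liminf_eq

theorem MeasureTheory.ae_tendsto_zero_of_tsum_lintegral_ne_top {α : Type*} [MeasurableSpace α]
    {μ : Measure α} {f : ℕ → α → ℝ≥0∞} (hf : ∀ k, AEMeasurable (f k) μ)
    (h : ∑' k, ∫⁻ y, f k y ∂μ ≠ ∞) :
    ∀ᵐ y ∂μ, Tendsto (fun k => f k y) atTop (𝓝 0) := by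
  rw [← lintegral_tsum hf] at h
  filter_upwards [ae_lt_top' (AEMeasurable.tsum hf) h] with y hy
  exact ENNReal.tendsto_atTop_zero_of_tsum_ne_top hy.ne

section CoverWeight

variable {X Y : Type*} [PseudoEMetricSpace X] [MeasurableSpace Y] (μ : Measure Y) (m : ℕ)
  (F : X → Y) (A : ℕ → Set X)

/-- The function `g = ∑ᵢ (diam Aᵢ)^m χ_{Zᵢ}`, `Zᵢ` being a measurable hull of `F(Aᵢ)`. -/
noncomputable def coverWeight (y : Y) : ℝ≥0∞ :=
  ∑' i, (toMeasurable μ (F '' A i)).indicator (fun _ => ediam (A i) ^ m) y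

theorem measurable_coverWeight : Measurable (coverWeight μ m F A) :=
  Measurable.tsum fun _ => measurable_const.indicator (measurableSet_toMeasurable _ _)

theorem lintegral_coverWeight :
    ∫⁻ y, coverWeight μ m F A y ∂μ = ∑' i, ediam (A i) ^ m * μ (F '' A i) := by
  unfold coverWeight
  rw [lintegral_tsum fun _ =>
    (measurable_const.indicator (measurableSet_toMeasurable _ _)).aemeasurable]
  simp only [lintegral_indicator_const (measurableSet_toMeasurable _ _), measure_toMeasurable]

theorem tsum_ediam_fiber_rpow_le_coverWeight (hm : m ≠ 0) (y : Y) :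
    ∑' i, ediam (F ⁻¹' {y} ∩ A i) ^ (m : ℝ) ≤ coverWeight μ m F A y := by
  refine ENNReal.tsum_le_tsum fun i => ?_
  rw [ENNReal.rpow_natCast]
  by_cases hy : y ∈ toMeasurable μ (F '' A i)
  · rw [indicator_of_mem hy]
    exact pow_le_pow_left₀ zero_le (ediam_mono inter_subset_right) m
  · have : F ⁻¹' {y} ∩ A i = ∅ := eq_empty_of_forall_notMem fun x ⟨hx, hxA⟩ =>
      hy (subset_toMeasurable _ _ ⟨x, hxA, hx⟩)
    simp [this, hm]

end CoverWeight

theorem lintegral_coverWeight_le {X : Type*} [PseudoEMetricSpace X] (n m : ℕ)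
    (F : X → EuclideanSpace ℝ (Fin n)) (A : ℕ → Set X) :
    ∫⁻ y, coverWeight volume m F A y ≤
      2 ^ n * ∑' i, hContent n (F '' A i) * ediam (A i) ^ m := by
  rw [lintegral_coverWeight, ← ENNReal.tsum_mul_left]
  refine ENNReal.tsum_le_tsum fun i => ?_
  calc ediam (A i) ^ m * volume (F '' A i)
      ≤ ediam (A i) ^ m * (2 ^ n * hContent n (F '' A i)) := by
        gcongr; exact volume_le_two_pow_mul_hContent n _
    _ = 2 ^ n * (hContent n (F '' A i) * ediam (A i) ^ m) := by ring

theorem stmt_13_general (n m : ℕ) (hm : 1 ≤ m)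
    (F : EuclideanSpace ℝ (Fin (n + m)) → EuclideanSpace ℝ (Fin n))
    (E : Set (EuclideanSpace ℝ (Fin (n + m))))
    (h0 : mapContent n m (unitCube (n + m)) F E = 0) :
    ∀ᵐ y ∂(volume : Measure (EuclideanSpace ℝ (Fin n))),
      μH[(m : ℝ)] (F ⁻¹' {y} ∩ E) = 0 := by
  have hpos : ∀ k : ℕ, (0 : ℝ≥0∞) < 2⁻¹ ^ k := fun k => ENNReal.pow_pos (by norm_num) k
  choose A hEA hA using fun k => exists_cover_of_mapContent_lt (h0.trans_lt (hpos k))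
  have hint : ∀ k, ∫⁻ y, coverWeight volume m F (A k) y ≤ 2 ^ n * 2⁻¹ ^ k := fun k =>
    (lintegral_coverWeight_le n m F (A k)).trans (by gcongr; exact (hA k).le)
  have hsum : ∑' k, ∫⁻ y, coverWeight volume m F (A k) y ≠ ∞ := by
    refine ne_top_of_le_ne_top ?_ (ENNReal.tsum_le_tsum hint)
    rw [ENNReal.tsum_mul_left, ENNReal.tsum_geometric, ENNReal.one_sub_inv_two, inv_inv]
    exact ENNReal.mul_ne_top (by simp) (by simp)
  filter_upwards [ae_tendsto_zero_of_tsum_lintegral_ne_top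
    (fun k => (measurable_coverWeight _ _ _ _).aemeasurable) hsum] with y hy
  refine Measure.hausdorffMeasure_eq_zero_of_tendsto_tsum_ediam_rpow (by positivity)
    (fun k i => F ⁻¹' {y} ∩ A k i) (fun k => ?_)
    (tendsto_of_tendsto_of_tendsto_of_le_of_le tendsto_const_nhds hy (fun _ => zero_le)
      fun k => tsum_ediam_fiber_rpow_le_coverWeight _ _ _ _ (by omega) y)
  rw [← inter_iUnion]
  exact inter_subset_inter_right _ (hEA k)

/-- If `F : [0,1]^{n+m} → ℝⁿ` is Lipschitz, `m ≥ 1`, and `Ĥ^{n,m}_∞(F,E) = 0`, then for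
`H^n`-a.e. `y ∈ ℝⁿ` the `m`-dimensional Hausdorff measure of `F⁻¹(y) ∩ E` vanishes. -/
theorem stmt_13 (n m : ℕ) (hn : 1 ≤ n) (hm : 1 ≤ m) (K : NNReal)
    (F : EuclideanSpace ℝ (Fin (n + m)) → EuclideanSpace ℝ (Fin n))
    (hF : LipschitzOnWith K F (unitCube (n + m)))
    (E : Set (EuclideanSpace ℝ (Fin (n + m)))) (hE : MeasurableSet E)
    (hEQ : E ⊆ unitCube (n + m))
    (h0 : mapContent n m (unitCube (n + m)) F E = 0) :
    ∀ᵐ y ∂(volume : Measure (EuclideanSpace ℝ (Fin n))),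
      μH[(m : ℝ)] (F ⁻¹' {y} ∩ E) = 0 :=
  stmt_13_general n m hm F E h0
end
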